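/- Let μ be a probability measure on X and N : X × ℝ^p → ℝ be such that for each x the map θ ↦ N(x, θ) is differentiable at θ₀, with the outer product x ↦ ∇_θN(x, θ₀) ∇_θN(x, θ₀)ᵀ μ-integrable, and define M(θ₀) = ∫_X ∇_θN(x, θ₀) ∇_θN(x, θ₀)ᵀ dμ(x). If T : ℝ → ℝ^p is a curve with T(0) = θ₀, differentiable at 0 with velocity v = T'(0), satisfying N(x, T(α)) = N(x, θ₀) for all x ∈ X and α ∈ ℝ, then M(θ₀) v = 0, i.e. v is a singular vector of M(θ₀) with singular value 0. -/

import Mathlib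

open MeasureTheory Matrix

/-
The symmetry makes `α ↦ N(x, T α)` constant, so by the chain rule the directional derivative
`∇_θN(x, θ₀) ⬝ v` vanishes for every `x`. Row `j` of `M(θ₀) v` is the integral of
`∂_j N(x, θ₀) · (∇_θN(x, θ₀) ⬝ v)`, hence zero.
-/

theorem fderiv_apply_deriv_eq_zero_of_comp_eq_const {𝕜 E F : Type*} [NontriviallyNormedField 𝕜]
    [NormedAddCommGroup E] [NormedSpace 𝕜 E] [NormedAddCommGroup F] [NormedSpace 𝕜 F]
    {f : E → F} {T : 𝕜 → E} {c : F} {t₀ : 𝕜}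
    (hf : DifferentiableAt 𝕜 f (T t₀)) (hT : DifferentiableAt 𝕜 T t₀) (hfT : ∀ t, f (T t) = c) :
    fderiv 𝕜 f (T t₀) (deriv T t₀) = 0 := by
  have hchain : HasDerivAt (f ∘ T) (fderiv 𝕜 f (T t₀) (deriv T t₀)) t₀ :=
    hf.hasFDerivAt.comp_hasDerivAt t₀ hT.hasDerivAt
  have hconst : f ∘ T = fun _ => c := funext hfT
  rw [hconst] at hchain
  exact hchain.unique (hasDerivAt_const t₀ c)

theorem ContinuousLinearMap.apply_eq_dotProduct_single {ι R : Type*} [Fintype ι]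
    [DecidableEq ι] [CommSemiring R] [TopologicalSpace R] (L : (ι → R) →L[R] R) (v : ι → R) :
    L v = (fun k => L (Pi.single k 1)) ⬝ᵥ v := by
  conv_lhs => rw [pi_eq_sum_univ' v]
  simp [dotProduct, mul_comm]

theorem Matrix.mulVec_apply_eq_integral_of_eq_integral_mul {X ι : Type*} [MeasurableSpace X]
    [Fintype ι] {μ : Measure X} (g : X → ι → ℝ)
    (hint : ∀ j k, Integrable (fun x => g x j * g x k) μ)
    {M : Matrix ι ι ℝ} (hM : ∀ j k, M j k = ∫ x, g x j * g x k ∂μ) (v : ι → ℝ) (j : ι) :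
    (M *ᵥ v) j = ∫ x, g x j * (g x ⬝ᵥ v) ∂μ := by
  simp only [mulVec, dotProduct, Finset.mul_sum, hM, ← integral_mul_const]
  rw [← integral_finsetSum _ fun k _ => (hint j k).mul_const (v k)]
  simp only [mul_assoc]

theorem exact_symmetry_gram_matrix_singular_general
    {X : Type*} [MeasurableSpace X] {p : ℕ}
    (μ : Measure X)
    (N : X → (Fin p → ℝ) → ℝ)
    (θ₀ : Fin p → ℝ)
    (hN : ∀ x : X, DifferentiableAt ℝ (N x) θ₀)
    (hint : ∀ j k : Fin p, Integrable
      (fun x => fderiv ℝ (N x) θ₀ (Pi.single j 1) *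
        fderiv ℝ (N x) θ₀ (Pi.single k 1)) μ)
    (M : Matrix (Fin p) (Fin p) ℝ)
    (hM : ∀ j k : Fin p, M j k =
      ∫ x, fderiv ℝ (N x) θ₀ (Pi.single j 1) *
        fderiv ℝ (N x) θ₀ (Pi.single k 1) ∂μ)
    (T : ℝ → (Fin p → ℝ))
    (hT0 : T 0 = θ₀)
    (hT : DifferentiableAt ℝ T 0)
    (v : Fin p → ℝ) (hv : v = deriv T 0)
    (hsym : ∀ (x : X) (α : ℝ), N x (T α) = N x θ₀) :
    M.mulVec v = 0 := by
  set g : X → Fin p → ℝ := fun x k => fderiv ℝ (N x) θ₀ (Pi.single k 1)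
  have hdir : ∀ x, g x ⬝ᵥ v = 0 := fun x => by
    rw [← (fderiv ℝ (N x) θ₀).apply_eq_dotProduct_single, hv, ← hT0]
    exact fderiv_apply_deriv_eq_zero_of_comp_eq_const (hT0 ▸ hN x) hT (hsym x)
  funext j
  simp [mulVec_apply_eq_integral_of_eq_integral_mul g hint hM, hdir]

/-- An exact continuous parameter symmetry with velocity `v`
gives `M(θ₀) v = 0`, where `M(θ₀) = ∫ ∇_θN(x,θ₀) ∇_θN(x,θ₀)ᵀ dμ(x)` is the
Gram matrix of parameter gradients under a probability measure `μ`. -/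
theorem exact_symmetry_gram_matrix_singular
    {X : Type*} [MeasurableSpace X] {p : ℕ}
    (μ : Measure X) [IsProbabilityMeasure μ]
    (N : X → (Fin p → ℝ) → ℝ)
    (θ₀ : Fin p → ℝ)
    (hN : ∀ x : X, DifferentiableAt ℝ (N x) θ₀)
    (hint : ∀ j k : Fin p, Integrable
      (fun x => fderiv ℝ (N x) θ₀ (Pi.single j 1) *
        fderiv ℝ (N x) θ₀ (Pi.single k 1)) μ)
    (M : Matrix (Fin p) (Fin p) ℝ)
    (hM : ∀ j k : Fin p, M j k =
      ∫ x, fderiv ℝ (N x) θ₀ (Pi.single j 1) *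
        fderiv ℝ (N x) θ₀ (Pi.single k 1) ∂μ)
    (T : ℝ → (Fin p → ℝ))
    (hT0 : T 0 = θ₀)
    (hT : DifferentiableAt ℝ T 0)
    (v : Fin p → ℝ) (hv : v = deriv T 0)
    (hsym : ∀ (x : X) (α : ℝ), N x (T α) = N x θ₀) :
    M.mulVec v = 0 :=
  exact_symmetry_gram_matrix_singular_general μ N θ₀ hN hint M hM T hT0 hT v hv hsym
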